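/- For 3×3 matrices A, B, C, D, the operation A ◇ B = (A − B)* − A* − B* satisfies (CAD) ◇ (CBD) = D*(A ◇ B)C*. -/

import Mathlib

open Matrix

namespace Matrix

variable {n R : Type*} [Fintype n] [DecidableEq n] [CommRing R]

def diamond (A B : Matrix n n R) : Matrix n n R :=
  (A - B).adjugate - A.adjugate - B.adjugate

theorem adjugate_mul_mul (C A D : Matrix n n R) :
    (C * A * D).adjugate = D.adjugate * A.adjugate * C.adjugate := by
  rw [adjugate_mul_distrib, adjugate_mul_distrib, Matrix.mul_assoc]

theorem diamond_mul_mul (A B C D : Matrix n n R) :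
    diamond (C * A * D) (C * B * D) = D.adjugate * diamond A B * C.adjugate := by
  have hsub : C * A * D - C * B * D = C * (A - B) * D := by
    rw [Matrix.mul_sub, Matrix.sub_mul]
  rw [diamond, diamond, hsub, adjugate_mul_mul, adjugate_mul_mul, adjugate_mul_mul,
    Matrix.mul_sub, Matrix.mul_sub, Matrix.sub_mul, Matrix.sub_mul]

end Matrix

theorem diamond_congr {R : Type*} [CommRing R] (A B C D : Matrix (Fin 3) (Fin 3) R) :
    (C * A * D - C * B * D).adjugate - (C * A * D).adjugate - (C * B * D).adjugate =
      D.adjugate * ((A - B).adjugate - A.adjugate - B.adjugate) * C.adjugate :=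
  diamond_mul_mul A B C D
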